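/- Let V be a finite index set, G a directed acyclic graph on V, and (X_v)_{v ∈ V} a family of random variables on a probability space, each taking values in a finite type, that satisfies the local Markov condition with respect to G. Then for every vertex v ∈ V and every subset S with PA_v ⊆ S ⊆ V \ {v} such that v is not an ancestor in G of any element of S, the conditional Shannon entropy H(X_v | (X_w)_{w ∈ S}) is equal to H(X_v | (X_w)_{w ∈ PA_v}). -/
import Mathlib


open MeasureTheory

/-- Conditional Shannon entropy `H(X | Y)` of finitely-valued random variables:
`H(X | Y) = -∑_{x,y} P(X = x, Y = y) * log P(X = x | Y = y)`, with the convention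
that terms with zero probability vanish (Lean's `log 0 = 0` and `a / 0 = 0`
conventions make this automatic). -/
noncomputable def condEntropy {Ω α β : Type*} [MeasurableSpace Ω] [Fintype α] [Fintype β]
    (μ : Measure Ω) (X : Ω → α) (Y : Ω → β) : ℝ :=
  -∑ x : α, ∑ y : β,
      (μ {ω | X ω = x ∧ Y ω = y}).toReal *
        Real.log ((μ {ω | X ω = x ∧ Y ω = y}).toReal / (μ {ω | Y ω = y}).toReal)

/-- `X` and `W` are conditionally independent given `Z`:
for all values `x, w, z` with `P(Z = z) > 0`,
`P(X = x, W = w | Z = z) = P(X = x | Z = z) * P(W = w | Z = z)`. -/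
def CondIndepFun {Ω α β γ : Type*} [MeasurableSpace Ω]
    (μ : Measure Ω) (X : Ω → α) (W : Ω → β) (Z : Ω → γ) : Prop :=
  ∀ (x : α) (w : β) (z : γ), 0 < (μ {ω | Z ω = z}).toReal →
    (μ {ω | X ω = x ∧ W ω = w ∧ Z ω = z}).toReal / (μ {ω | Z ω = z}).toReal =
      ((μ {ω | X ω = x ∧ Z ω = z}).toReal / (μ {ω | Z ω = z}).toReal) *
        ((μ {ω | W ω = w ∧ Z ω = z}).toReal / (μ {ω | Z ω = z}).toReal)

lemma my_measure_eq_sum_fibers {Ω γ : Type*} [MeasurableSpace Ω] (μ : Measure Ω)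
    [Fintype γ] {A : Set Ω} (hA : MeasurableSet A) (f : Ω → γ)
    (hf : ∀ c, MeasurableSet {ω | f ω = c}) :
    μ A = ∑ c, μ (A ∩ {ω | f ω = c}) := by
  have hd : Pairwise (Function.onFun Disjoint (fun c => A ∩ {ω | f ω = c})) := by
    intro c d hcd
    simp only [Function.onFun, Set.disjoint_left, Set.mem_inter_iff, Set.mem_setOf_eq]
    rintro ω ⟨-, h1⟩ ⟨-, h2⟩
    exact hcd (h1.symm.trans h2)
  have h1 : A = ⋃ c, A ∩ {ω | f ω = c} := by
    ext ω; simp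
  calc μ A = μ (⋃ c, A ∩ {ω | f ω = c}) := by rw [← h1]
    _ = ∑' c, μ (A ∩ {ω | f ω = c}) := measure_iUnion hd fun c => hA.inter (hf c)
    _ = ∑ c, μ (A ∩ {ω | f ω = c}) := tsum_fintype _

lemma my_condEntropy_eq_of_proj {Ω α β γ : Type*} [MeasurableSpace Ω] (μ : Measure Ω)
    [IsFiniteMeasure μ] [Fintype α] [Fintype β] [Fintype γ]
    (X : Ω → α) (Y : Ω → β) (Z : Ω → γ) (π : β → γ)
    (hYZ : ∀ ω, Z ω = π (Y ω))
    (hXm : ∀ a, MeasurableSet {ω | X ω = a})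
    (hYm : ∀ b, MeasurableSet {ω | Y ω = b})
    (hscale : ∀ a b, 0 < (μ {ω | Z ω = π b}).toReal →
      (μ {ω | X ω = a ∧ Y ω = b}).toReal =
        (μ {ω | X ω = a ∧ Z ω = π b}).toReal / (μ {ω | Z ω = π b}).toReal *
          (μ {ω | Y ω = b}).toReal) :
    condEntropy μ X Y = condEntropy μ X Z := by
  classical
  have hZm : ∀ c, MeasurableSet {ω | Z ω = c} := by
    intro c
    have h : {ω | Z ω = c} = ⋃ (b : β) (_ : π b = c), {ω | Y ω = b} := by
      ext ω
      simp only [Set.mem_setOf_eq, Set.mem_iUnion, hYZ ω]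
      exact ⟨fun h => ⟨Y ω, h, rfl⟩, by rintro ⟨b, hb, hYb⟩; rw [hYb]; exact hb⟩
    rw [h]; exact MeasurableSet.iUnion fun b => MeasurableSet.iUnion fun _ => hYm b
  have hgroup : ∀ a c, μ {ω | X ω = a ∧ Z ω = c} =
      ∑ b, if π b = c then μ {ω | X ω = a ∧ Y ω = b} else 0 := by
    intro a c
    have hA : MeasurableSet {ω | X ω = a ∧ Z ω = c} := (hXm a).inter (hZm c)
    rw [my_measure_eq_sum_fibers μ hA Y hYm]
    refine Finset.sum_congr rfl fun b _ => ?_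
    by_cases hb : π b = c
    · rw [if_pos hb]
      congr 1
      ext ω
      simp only [Set.mem_inter_iff, Set.mem_setOf_eq]
      constructor
      · rintro ⟨⟨ha, -⟩, hy⟩; exact ⟨ha, hy⟩
      · rintro ⟨ha, hy⟩; exact ⟨⟨ha, by rw [hYZ ω, hy]; exact hb⟩, hy⟩
    · rw [if_neg hb]
      have : {ω | X ω = a ∧ Z ω = c} ∩ {ω | Y ω = b} = ∅ := by
        ext ω
        simp only [Set.mem_inter_iff, Set.mem_setOf_eq, Set.mem_empty_iff_false, iff_false,
          not_and]
        rintro ⟨-, hz⟩ hy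
        exact hb (by rw [← hz, hYZ ω, hy])
      rw [this, measure_empty]
  have hgroupR : ∀ a c, (μ {ω | X ω = a ∧ Z ω = c}).toReal =
      ∑ b, if π b = c then (μ {ω | X ω = a ∧ Y ω = b}).toReal else 0 := by
    intro a c
    rw [hgroup a c, ENNReal.toReal_sum]
    · exact Finset.sum_congr rfl fun b _ => by split <;> simp
    · intro b _; split
      · exact measure_ne_top μ _
      · simp
  have hterm : ∀ a b,
      (μ {ω | X ω = a ∧ Y ω = b}).toReal *
          Real.log ((μ {ω | X ω = a ∧ Y ω = b}).toReal / (μ {ω | Y ω = b}).toReal) =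
        (μ {ω | X ω = a ∧ Y ω = b}).toReal *
          Real.log ((μ {ω | X ω = a ∧ Z ω = π b}).toReal / (μ {ω | Z ω = π b}).toReal) := by
    intro a b
    rcases eq_or_lt_of_le (ENNReal.toReal_nonneg (a := μ {ω | X ω = a ∧ Y ω = b})) with h0 | h0
    · rw [← h0]; simp
    · have hqb : 0 < (μ {ω | Y ω = b}).toReal :=
        lt_of_lt_of_le h0 (ENNReal.toReal_mono (measure_ne_top _ _)
          (measure_mono fun ω h => h.2))
      have hQc : 0 < (μ {ω | Z ω = π b}).toReal :=
        lt_of_lt_of_le hqb (ENNReal.toReal_mono (measure_ne_top _ _)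
          (measure_mono fun ω h => by
            simp only [Set.mem_setOf_eq] at *
            rw [hYZ ω, h]))
      congr 1
      rw [hscale a b hQc, mul_div_assoc, div_self hqb.ne', mul_one]
  unfold condEntropy
  congr 1
  refine Finset.sum_congr rfl fun a _ => ?_
  rw [Finset.sum_congr rfl fun b _ => hterm a b]
  symm
  calc ∑ c, (μ {ω | X ω = a ∧ Z ω = c}).toReal *
        Real.log ((μ {ω | X ω = a ∧ Z ω = c}).toReal / (μ {ω | Z ω = c}).toReal)
      = ∑ c, (∑ b, if π b = c then (μ {ω | X ω = a ∧ Y ω = b}).toReal else 0) *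
          Real.log ((μ {ω | X ω = a ∧ Z ω = c}).toReal / (μ {ω | Z ω = c}).toReal) := by
        refine Finset.sum_congr rfl fun c _ => ?_
        rw [hgroupR a c]
    _ = ∑ c, ∑ b, (if π b = c then (μ {ω | X ω = a ∧ Y ω = b}).toReal *
          Real.log ((μ {ω | X ω = a ∧ Z ω = c}).toReal / (μ {ω | Z ω = c}).toReal) else 0) := by
        refine Finset.sum_congr rfl fun c _ => ?_
        rw [Finset.sum_mul]
        exact Finset.sum_congr rfl fun b _ => by split <;> simp
    _ = ∑ b, ∑ c, (if π b = c then (μ {ω | X ω = a ∧ Y ω = b}).toReal *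
          Real.log ((μ {ω | X ω = a ∧ Z ω = c}).toReal / (μ {ω | Z ω = c}).toReal) else 0) :=
        Finset.sum_comm
    _ = ∑ b, (μ {ω | X ω = a ∧ Y ω = b}).toReal *
          Real.log ((μ {ω | X ω = a ∧ Z ω = π b}).toReal / (μ {ω | Z ω = π b}).toReal) := by
        refine Finset.sum_congr rfl fun b _ => ?_
        simp

lemma my_meas_fiber {Ω V : Type*} [MeasurableSpace Ω] {α : V → Type*}
    {ι : Type*} [Countable ι] (g : ι → V) (X : ∀ v, Ω → α v)
    (hX : ∀ v x, MeasurableSet {ω | X v ω = x}) (s : ∀ i, α (g i)) :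
    MeasurableSet {ω | (fun i => X (g i) ω) = s} := by
  have h : {ω | (fun i => X (g i) ω) = s} = ⋂ i, {ω | X (g i) ω = s i} := by
    ext ω; simp [funext_iff]
  rw [h]
  exact MeasurableSet.iInter fun i => hX _ _

/-- Let `G` be a DAG on a finite vertex set `V` (irreflexive edge
relation with irreflexive transitive closure) and `(X v)_{v ∈ V}` a family of
finitely-valued random variables satisfying the local Markov condition: each `X v`
is conditionally independent of the family indexed by the non-descendants of `v`
other than its parents, given the family indexed by the parents `PA v = {u | G u v}`.
Then for every `v` and every set `S` with `PA v ⊆ S ⊆ V \ {v}` such that `v` is not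
an ancestor of any element of `S` (no element of `S` is a descendant of `v`),
`H(X v | (X w)_{w ∈ S}) = H(X v | (X w)_{w ∈ PA v})`. -/
theorem condEntropy_eq_condEntropy_parents
    {Ω : Type*} [MeasurableSpace Ω] (μ : Measure Ω) [IsProbabilityMeasure μ]
    {V : Type*} [Fintype V] [DecidableEq V]
    (G : V → V → Prop) [DecidableRel G]
    (hirrefl : ∀ v, ¬ G v v)
    (hacyclic : ∀ v, ¬ Relation.TransGen G v v)
    {α : V → Type*} [∀ v, Fintype (α v)]
    (X : ∀ v, Ω → α v)
    (hXmeas : ∀ v (x : α v), MeasurableSet {ω | X v ω = x})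
    (hMarkov : ∀ v : V,
      CondIndepFun μ (X v)
        (fun ω => fun u : {u : V // u ≠ v ∧ ¬ Relation.TransGen G v u ∧ ¬ G u v} =>
          X u.1 ω)
        (fun ω => fun u : {u : V // G u v} => X u.1 ω))
    (v : V) (S : Finset V)
    (hPA : ∀ u, G u v → u ∈ S)
    (hv : v ∉ S)
    (hnd : ∀ u ∈ S, ¬ Relation.TransGen G v u) :
    condEntropy μ (X v) (fun ω => fun u : S => X u.1 ω) =
      condEntropy μ (X v) (fun ω => fun u : {u : V // G u v} => X u.1 ω) := by
  classical
  have hmemT : ∀ u : S, ¬ G u.1 v →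
      ((u : V) ≠ v ∧ ¬ Relation.TransGen G v (u : V) ∧ ¬ G (u : V) v) :=
    fun u h => ⟨fun e => hv (e ▸ u.2), hnd u.1 u.2, h⟩
  refine my_condEntropy_eq_of_proj μ (X v)
    (fun ω => fun u : S => X u.1 ω)
    (fun ω => fun u : {u : V // G u v} => X u.1 ω)
    (fun s p => s ⟨p.1, hPA p.1 p.2⟩)
    (fun ω => rfl)
    (hXmeas v)
    (fun s => my_meas_fiber Subtype.val X hXmeas s)
    ?_
  intro a s hz
  set z : ∀ p : {u : V // G u v}, α p.1 := fun p => s ⟨p.1, hPA p.1 p.2⟩ with hzdef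
  -- key set identity
  have hkey : ∀ (A : Set Ω) (w : ∀ u : {u : V // u ≠ v ∧ ¬ Relation.TransGen G v u ∧ ¬ G u v}, α u.1),
      (A ∩ {ω | (fun u : S => X u.1 ω) = s}) ∩
          {ω | (fun u : {u : V // u ≠ v ∧ ¬ Relation.TransGen G v u ∧ ¬ G u v} => X u.1 ω) = w} =
        if ∀ (u : S) (h : ¬ G u.1 v), w ⟨u.1, hmemT u h⟩ = s u
        then A ∩ {ω | (fun u : {u : V // u ≠ v ∧ ¬ Relation.TransGen G v u ∧ ¬ G u v} => X u.1 ω) = w ∧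
            (fun p : {u : V // G u v} => X p.1 ω) = z}
        else ∅ := by
    intro A w
    split
    case isTrue hcw =>
      ext ω
      simp only [Set.mem_inter_iff, Set.mem_setOf_eq]
      constructor
      · rintro ⟨⟨hA, hs⟩, ht⟩
        exact ⟨hA, ht, funext fun p => congrFun hs ⟨p.1, hPA p.1 p.2⟩⟩
      · rintro ⟨hA, ht, hp⟩
        refine ⟨⟨hA, funext fun u => ?_⟩, ht⟩
        by_cases hg : G u.1 v
        · exact congrFun hp ⟨u.1, hg⟩
        · rw [← hcw u hg]; exact congrFun ht ⟨u.1, hmemT u hg⟩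
    case isFalse hcw =>
      ext ω
      simp only [Set.mem_inter_iff, Set.mem_setOf_eq, Set.mem_empty_iff_false, iff_false, not_and]
      rintro ⟨-, hs⟩ ht
      exact hcw fun u hg => (congrFun ht ⟨u.1, hmemT u hg⟩).symm.trans (congrFun hs u)
  -- partition of a measure over the values of the remaining non-descendants
  have hpart : ∀ (A : Set Ω), MeasurableSet A →
      μ (A ∩ {ω | (fun u : S => X u.1 ω) = s}) =
        ∑ w : (∀ u : {u : V // u ≠ v ∧ ¬ Relation.TransGen G v u ∧ ¬ G u v}, α u.1),
          if ∀ (u : S) (h : ¬ G u.1 v), w ⟨u.1, hmemT u h⟩ = s u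
          then μ (A ∩ {ω | (fun u : {u : V // u ≠ v ∧ ¬ Relation.TransGen G v u ∧ ¬ G u v} => X u.1 ω) = w ∧
              (fun p : {u : V // G u v} => X p.1 ω) = z})
          else 0 := by
    intro A hA
    rw [my_measure_eq_sum_fibers μ (hA.inter (my_meas_fiber Subtype.val X hXmeas s))
      (fun ω (u : {u : V // u ≠ v ∧ ¬ Relation.TransGen G v u ∧ ¬ G u v}) => X u.1 ω)
      (my_meas_fiber Subtype.val X hXmeas)]
    refine Finset.sum_congr rfl fun w _ => ?_
    rw [hkey A w]
    split <;> simp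
  have e1 := hpart {ω | X v ω = a} (hXmeas v a)
  have e2 := hpart Set.univ MeasurableSet.univ
  simp only [Set.univ_inter] at e2
  simp only [Set.inter_def, Set.mem_setOf_eq] at e1
  -- pass to real numbers
  have toRealIte : ∀ (P : Prop) [Decidable P] (m : ENNReal),
      (if P then m else 0).toReal = if P then m.toReal else 0 := by
    intro P _ m; split <;> simp
  have e1' : (μ {ω | X v ω = a ∧ (fun u : S => X u.1 ω) = s}).toReal =
      ∑ w : (∀ u : {u : V // u ≠ v ∧ ¬ Relation.TransGen G v u ∧ ¬ G u v}, α u.1),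
        if ∀ (u : S) (h : ¬ G u.1 v), w ⟨u.1, hmemT u h⟩ = s u
        then (μ {ω | X v ω = a ∧ ((fun u : {u : V // u ≠ v ∧ ¬ Relation.TransGen G v u ∧ ¬ G u v} => X u.1 ω) = w ∧
            (fun p : {u : V // G u v} => X p.1 ω) = z)}).toReal
        else 0 := by
    rw [e1, ENNReal.toReal_sum]
    · exact Finset.sum_congr rfl fun w _ => toRealIte _ _
    · intro w _; split
      · exact measure_ne_top μ _
      · simp
  have e2' : (μ {ω | (fun u : S => X u.1 ω) = s}).toReal =
      ∑ w : (∀ u : {u : V // u ≠ v ∧ ¬ Relation.TransGen G v u ∧ ¬ G u v}, α u.1),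
        if ∀ (u : S) (h : ¬ G u.1 v), w ⟨u.1, hmemT u h⟩ = s u
        then (μ {ω | (fun u : {u : V // u ≠ v ∧ ¬ Relation.TransGen G v u ∧ ¬ G u v} => X u.1 ω) = w ∧
            (fun p : {u : V // G u v} => X p.1 ω) = z}).toReal
        else 0 := by
    rw [e2, ENNReal.toReal_sum]
    · exact Finset.sum_congr rfl fun w _ => toRealIte _ _
    · intro w _; split
      · exact measure_ne_top μ _
      · simp
  -- the Markov property, per fiber
  have hMk : ∀ w, (μ {ω | X v ω = a ∧ ((fun u : {u : V // u ≠ v ∧ ¬ Relation.TransGen G v u ∧ ¬ G u v} => X u.1 ω) = w ∧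
        (fun p : {u : V // G u v} => X p.1 ω) = z)}).toReal =
      (μ {ω | X v ω = a ∧ (fun p : {u : V // G u v} => X p.1 ω) = z}).toReal /
          (μ {ω | (fun p : {u : V // G u v} => X p.1 ω) = z}).toReal *
        (μ {ω | (fun u : {u : V // u ≠ v ∧ ¬ Relation.TransGen G v u ∧ ¬ G u v} => X u.1 ω) = w ∧
            (fun p : {u : V // G u v} => X p.1 ω) = z}).toReal := by
    intro w
    have hm := hMarkov v a w z hz
    calc (μ {ω | X v ω = a ∧ ((fun u : {u : V // u ≠ v ∧ ¬ Relation.TransGen G v u ∧ ¬ G u v} => X u.1 ω) = w ∧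
            (fun p : {u : V // G u v} => X p.1 ω) = z)}).toReal
        = (μ {ω | X v ω = a ∧ ((fun u : {u : V // u ≠ v ∧ ¬ Relation.TransGen G v u ∧ ¬ G u v} => X u.1 ω) = w ∧
            (fun p : {u : V // G u v} => X p.1 ω) = z)}).toReal /
            (μ {ω | (fun p : {u : V // G u v} => X p.1 ω) = z}).toReal *
            (μ {ω | (fun p : {u : V // G u v} => X p.1 ω) = z}).toReal := by
          rw [div_mul_cancel₀ _ hz.ne']
      _ = _ := by
          rw [hm, mul_assoc, div_mul_cancel₀ _ hz.ne']
  rw [e1', e2', Finset.mul_sum]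
  refine Finset.sum_congr rfl fun w _ => ?_
  split
  · exact hMk w
  · rw [mul_zero]
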